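/- arXiv:2202.14022 — 5 statements merged into one kernel-verified Lean document; each statement's English description precedes it below -/
import Mathlib

section
/- Let X be an infinite set, ℱ a non-principal ultrafilter on X, and A a local ring of finite cardinality with maximal ideal 𝔪. Let f : (∏_{α∈X} A)_ℱ → A be the unique ring isomorphism such that {α : x_α = f([(x_α)])} ∈ ℱ for all (x_α), and let π : ∏_{α∈X} A → A be the composite of the quotient map to the ultraproduct with f. Then π is a localisation of ∏_{α∈X} A at the complement of the prime ideal π^{-1}(𝔪): every element of ∏_{α∈X} A outside π^{-1}(𝔪) is mapped by π to a unit of A, and every ring homomorphism g : ∏_{α∈X} A → B that sends the complement of π^{-1}(𝔪) into the units of B factors uniquely through π. -/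
open Filter IsLocalRing

universe u

/-! The kernel of the ultrapower map `A^X → A` consists of the `x` vanishing `ℱ`-almost
everywhere, and such an `x` is killed by the indicator of its zero set, an element mapping to `1`.
So any ring homomorphism inverting the elements mapping to units kills the kernel, and it factors
through `π` because the constant maps split `π`. -/

theorem Filter.EventuallyEq.exists_mul_eq_zero {X A : Type*} [MulZeroOneClass A]
    {l : Filter X} {x : X → A} (hx : x =ᶠ[l] 0) : ∃ s : X → A, s =ᶠ[l] 1 ∧ s * x = 0 := by
  classical
  refine ⟨fun α => if x α = 0 then 1 else 0, ?_, ?_⟩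
  · filter_upwards [hx] with α hα
    simp [hα]
  · funext α
    by_cases hα : x α = 0 <;> simp [hα]

theorem Filter.Germ.ker_coeRingHom_le_ker {X A B : Type*} [Semiring A] [Semiring B]
    {l : Filter X} (g : (X → A) →+* B) (hg : ∀ s : X → A, s =ᶠ[l] 1 → IsUnit (g s)) :
    RingHom.ker (Germ.coeRingHom l) ≤ RingHom.ker g := by
  intro x hx
  have hx0 : x =ᶠ[l] 0 := Germ.coe_eq.mp hx
  obtain ⟨s, hs1, hsx⟩ := hx0.exists_mul_eq_zero
  have : g s * g x = 0 := by rw [← map_mul, hsx, map_zero]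
  exact (hg s hs1).mul_right_eq_zero.mp this

theorem Filter.Germ.comp_coeRingHom_const {X A : Type*} [Semiring A] {l : Filter X} [l.NeBot]
    (f : Germ l A →+* A) (hf : ∀ x : X → A, {α | x α = f x} ∈ l) (a : A) :
    (f.comp (Germ.coeRingHom l)) (Function.const X a) = a := by
  obtain ⟨α, hα⟩ := nonempty_of_mem (hf (Function.const X a))
  exact hα.symm

theorem ultraproduct_finite_local_ring_localisation_general
    {X : Type*} (ℱ : Ultrafilter X)
    (A : Type*) [CommRing A] [IsLocalRing A]
    (f : Filter.Germ (ℱ : Filter X) A ≃+* A)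
    (hf : ∀ x : X → A, {α | x α = f (↑x : Filter.Germ (ℱ : Filter X) A)} ∈ ℱ)
    (π : (X → A) →+* A)
    (hπ : π = (f : Filter.Germ (ℱ : Filter X) A →+* A).comp
      (Filter.Germ.coeRingHom (ℱ : Filter X))) :
    (∀ x : X → A, π x ∉ maximalIdeal A → IsUnit (π x)) ∧
      ∀ (B : Type u) [CommRing B] (g : (X → A) →+* B),
        (∀ x : X → A, π x ∉ maximalIdeal A → IsUnit (g x)) →
          ∃! h : A →+* B, h.comp π = g := by
  subst hπ
  refine ⟨fun _ => notMem_maximalIdeal.mp, fun B _ g hg => ?_⟩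
  have hsection : Function.RightInverse (Function.const X) _ :=
    Germ.comp_coeRingHom_const (f : Germ (ℱ : Filter X) A →+* A) hf
  have hker : RingHom.ker ((f : Germ (ℱ : Filter X) A →+* A).comp (Germ.coeRingHom _)) ≤
      RingHom.ker g := by
    rw [RingHom.ker_comp_of_injective _ f.injective]
    refine Germ.ker_coeRingHom_le_ker g fun s hs => hg s ?_
    have : (↑s : Germ (ℱ : Filter X) A) = 1 := Germ.coe_eq.mpr hs
    simp [this]
  exact ⟨_, RingHom.liftOfRightInverse_comp _ _ hsection ⟨g, hker⟩,
    fun h hh => RingHom.eq_liftOfRightInverse _ _ hsection g hker h hh⟩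

/-- Let ℱ be a non-principal ultrafilter on an infinite set X and A a local
ring of finite cardinality with maximal ideal 𝔪.  Let f be the ring isomorphism from the
ultraproduct of the constant family A to A characterised by the ultrafilter condition, and let
π be the composite of the quotient map with f.  Then π is a localisation of the product ring
∏ A at the complement of π⁻¹(𝔪): elements outside π⁻¹(𝔪) map to units, and every ring
homomorphism sending the complement of π⁻¹(𝔪) to units factors uniquely through π. -/
theorem ultraproduct_finite_local_ring_localisation
    {X : Type*} [Infinite X] (ℱ : Ultrafilter X) (hℱ : ∀ x : X, ℱ ≠ pure x)
    (A : Type*) [CommRing A] [IsLocalRing A] [Finite A]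
    (f : Filter.Germ (ℱ : Filter X) A ≃+* A)
    (hf : ∀ x : X → A, {α | x α = f (↑x : Filter.Germ (ℱ : Filter X) A)} ∈ ℱ)
    (π : (X → A) →+* A)
    (hπ : π = (f : Filter.Germ (ℱ : Filter X) A →+* A).comp
      (Filter.Germ.coeRingHom (ℱ : Filter X))) :
    (∀ x : X → A, π x ∉ maximalIdeal A → IsUnit (π x)) ∧
      ∀ (B : Type u) [CommRing B] (g : (X → A) →+* B),
        (∀ x : X → A, π x ∉ maximalIdeal A → IsUnit (g x)) →
          ∃! h : A →+* B, h.comp π = g :=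
  ultraproduct_finite_local_ring_localisation_general ℱ A f hf π hπ
end

section
/- Let X be an infinite set, ℱ a non-principal ultrafilter on X, A a ring of finite cardinality, and (M_α)_{α∈X} a bounded family of A-modules (i.e. there is an integer s such that every M_α is a quotient of A^s). Then there exists a set S ∈ ℱ such that for every α₀ ∈ S the ultraproduct (∏_{α∈X} M_α)_ℱ is isomorphic as an A-module to M_{α₀}. In particular such an α₀ exists. -/
open Filter

section Ultra

variable {X : Type*} (ℱ : Ultrafilter X) (A : Type*) [Ring A]

/-- The submodule of families vanishing on a set of the ultrafilter. -/
def ultraZero (M : X → Type*) [∀ α, AddCommGroup (M α)] [∀ α, Module A (M α)] :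
    Submodule A (∀ α, M α) where
  carrier := {x | ∀ᶠ α in (ℱ : Filter X), x α = 0}
  add_mem' := by
    intro a b ha hb
    filter_upwards [ha, hb] with α h1 h2
    simp [h1, h2]
  zero_mem' := Filter.Eventually.of_forall fun _ => rfl
  smul_mem' := by
    intro c x hx
    filter_upwards [hx] with α h
    simp [h]

lemma mem_ultraZero {M : X → Type*} [∀ α, AddCommGroup (M α)] [∀ α, Module A (M α)]
    {x : ∀ α, M α} :
    x ∈ ultraZero ℱ A M ↔ ∀ᶠ α in (ℱ : Filter X), x α = 0 := Iff.rfl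

/-- The ultraproduct of a family of `A`-modules along the ultrafilter `ℱ`. -/
abbrev Ultraproduct (M : X → Type*) [∀ α, AddCommGroup (M α)] [∀ α, Module A (M α)] :=
  (∀ α, M α) ⧸ ultraZero ℱ A M

/-- The map induced on ultraproducts by a family of linear maps. -/
def ultraMap {M N : X → Type*} [∀ α, AddCommGroup (M α)] [∀ α, Module A (M α)]
    [∀ α, AddCommGroup (N α)] [∀ α, Module A (N α)] (f : ∀ α, M α →ₗ[A] N α) :
    Ultraproduct ℱ A M →ₗ[A] Ultraproduct ℱ A N :=
  Submodule.mapQ _ _ (LinearMap.pi fun α => (f α).comp (LinearMap.proj α)) <| by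
    intro x hx
    simp only [Submodule.mem_comap]
    rw [mem_ultraZero]
    filter_upwards [hx] with α h
    simp [h]

lemma ultraMap_mk {M N : X → Type*} [∀ α, AddCommGroup (M α)] [∀ α, Module A (M α)]
    [∀ α, AddCommGroup (N α)] [∀ α, Module A (N α)] (f : ∀ α, M α →ₗ[A] N α)
    (x : ∀ α, M α) :
    ultraMap ℱ A f (Submodule.Quotient.mk x) =
      Submodule.Quotient.mk (fun α => f α (x α)) := by
  simp [ultraMap, Submodule.mapQ_apply]
  rfl

end Ultra

/-!
Over a finite ring `A`, the module `A^s` has only finitely many submodules, so along the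
ultrafilter the kernel of a presentation `A^s → M α` is eventually a fixed `K`. Hence `M α` is
eventually isomorphic to the finite module `A^s ⧸ K`, and the ultraproduct of the family is
isomorphic to the ultrapower of `A^s ⧸ K`, which is `A^s ⧸ K` itself because a function into a
finite set is constant along an ultrafilter.
-/

section EventuallyEquiv

variable {X : Type*} (ℱ : Ultrafilter X) (A : Type*) [Ring A]
  {M N : X → Type*} [∀ α, AddCommGroup (M α)] [∀ α, Module A (M α)]
  [∀ α, AddCommGroup (N α)] [∀ α, Module A (N α)]

lemma ultraMap_comp_eq_id_of_eventually {g : ∀ α, M α →ₗ[A] N α} {h : ∀ α, N α →ₗ[A] M α}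
    (hgh : ∀ᶠ α in (ℱ : Filter X), ∀ m, h α (g α m) = m) :
    ultraMap ℱ A h ∘ₗ ultraMap ℱ A g = LinearMap.id := by
  refine LinearMap.ext fun y => ?_
  obtain ⟨x, rfl⟩ := Submodule.Quotient.mk_surjective _ y
  rw [LinearMap.comp_apply, ultraMap_mk, ultraMap_mk, LinearMap.id_apply,
    Submodule.Quotient.eq, mem_ultraZero]
  filter_upwards [hgh] with α hα
  simp [hα]

noncomputable def ultraEquivOfEventuallyInverse (g : ∀ α, M α →ₗ[A] N α)
    (h : ∀ α, N α →ₗ[A] M α) (hgh : ∀ᶠ α in (ℱ : Filter X), ∀ m, h α (g α m) = m)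
    (hhg : ∀ᶠ α in (ℱ : Filter X), ∀ n, g α (h α n) = n) :
    Ultraproduct ℱ A M ≃ₗ[A] Ultraproduct ℱ A N :=
  .ofLinearMap (ultraMap ℱ A g) (ultraMap ℱ A h) (ultraMap_comp_eq_id_of_eventually ℱ A hhg)
    (ultraMap_comp_eq_id_of_eventually ℱ A hgh)

lemma nonempty_ultraproduct_equiv_of_eventually
    (hMN : ∀ᶠ α in (ℱ : Filter X), Nonempty (M α ≃ₗ[A] N α)) :
    Nonempty (Ultraproduct ℱ A M ≃ₗ[A] Ultraproduct ℱ A N) := by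
  classical
  let g α : M α →ₗ[A] N α := if hα : Nonempty (M α ≃ₗ[A] N α) then hα.some else 0
  let h α : N α →ₗ[A] M α := if hα : Nonempty (M α ≃ₗ[A] N α) then hα.some.symm else 0
  refine ⟨ultraEquivOfEventuallyInverse ℱ A g h ?_ ?_⟩ <;>
    filter_upwards [hMN] with α hα <;> simp [g, h, hα]

end EventuallyEquiv

section Ultrapower

variable {X : Type*} (ℱ : Ultrafilter X) (A : Type*) [Ring A]
  (N : Type*) [AddCommGroup N] [Module A N]

def ultraDiagonal : N →ₗ[A] Ultraproduct ℱ A (fun _ : X => N) :=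
  (ultraZero ℱ A fun _ : X => N).mkQ ∘ₗ LinearMap.pi fun _ => LinearMap.id

lemma ultraDiagonal_injective : Function.Injective (ultraDiagonal ℱ A N) := by
  intro m n hmn
  obtain ⟨α, hα⟩ := ((Submodule.Quotient.eq _).mp hmn).exists
  simpa [sub_eq_zero] using hα

lemma ultraDiagonal_surjective [Finite N] : Function.Surjective (ultraDiagonal ℱ A N) := by
  intro y
  obtain ⟨x, rfl⟩ := Submodule.Quotient.mk_surjective _ y
  obtain ⟨n, hn⟩ := Ultrafilter.eventually_exists_iff (P := fun n α => x α = n) |>.mp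
    (.of_forall fun α => ⟨x α, rfl⟩)
  refine ⟨n, (Submodule.Quotient.eq _).mpr ?_⟩
  filter_upwards [hn] with α hα
  simp [hα]

noncomputable def ultrapowerEquivOfFinite [Finite N] :
    Ultraproduct ℱ A (fun _ : X => N) ≃ₗ[A] N :=
  (LinearEquiv.ofBijective (ultraDiagonal ℱ A N)
    ⟨ultraDiagonal_injective ℱ A N, ultraDiagonal_surjective ℱ A N⟩).symm

lemma nonempty_ultraproduct_equiv_of_eventually_equiv_finite [Finite N]
    {M : X → Type*} [∀ α, AddCommGroup (M α)] [∀ α, Module A (M α)]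
    (hM : ∀ᶠ α in (ℱ : Filter X), Nonempty (M α ≃ₗ[A] N)) :
    Nonempty (Ultraproduct ℱ A M ≃ₗ[A] N) :=
  (nonempty_ultraproduct_equiv_of_eventually ℱ A hM).map
    (·.trans (ultrapowerEquivOfFinite ℱ A N))

end Ultrapower

lemma exists_eventually_nonempty_equiv_quotient {X : Type*} (ℱ : Ultrafilter X)
    {A : Type*} [Ring A] {P : Type*} [AddCommGroup P] [Module A P] [Finite P]
    {M : X → Type*} [∀ α, AddCommGroup (M α)] [∀ α, Module A (M α)]
    {f : ∀ α, P →ₗ[A] M α} (hf : ∀ α, Function.Surjective (f α)) :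
    ∃ K : Submodule A P, ∀ᶠ α in (ℱ : Filter X), Nonempty (M α ≃ₗ[A] P ⧸ K) := by
  have : Finite (Submodule A P) := .of_injective _ SetLike.coe_injective
  obtain ⟨K, hK⟩ := Ultrafilter.eventually_exists_iff (P := fun K α => LinearMap.ker (f α) = K)
    |>.mp (.of_forall fun α => ⟨LinearMap.ker (f α), rfl⟩)
  refine ⟨K, ?_⟩
  filter_upwards [hK] with α hα
  exact ⟨((f α).quotKerEquivOfSurjective (hf α)).symm.trans (Submodule.quotEquivOfEq _ _ hα)⟩

theorem ultraproduct_of_bounded_family_isomorphic_to_member_general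
    {X : Type*} (ℱ : Ultrafilter X)
    (A : Type*) [Ring A] [Finite A]
    (M : X → Type*) [∀ α, AddCommGroup (M α)] [∀ α, Module A (M α)]
    (s : ℕ) (hbdd : ∀ α, ∃ f : (Fin s → A) →ₗ[A] M α, Function.Surjective f) :
    (∃ S ∈ ℱ, ∀ α₀ ∈ S, Nonempty (Ultraproduct ℱ A M ≃ₗ[A] M α₀)) ∧
      ∃ α₀ : X, Nonempty (Ultraproduct ℱ A M ≃ₗ[A] M α₀) := by
  choose f hf using hbdd
  obtain ⟨K, hK⟩ := exists_eventually_nonempty_equiv_quotient ℱ hf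
  have : Finite ((Fin s → A) ⧸ K) := .of_surjective _ K.mkQ_surjective
  obtain ⟨E⟩ := nonempty_ultraproduct_equiv_of_eventually_equiv_finite ℱ A _ hK
  have hS : ∀ α₀ ∈ {α | Nonempty (M α ≃ₗ[A] (Fin s → A) ⧸ K)},
      Nonempty (Ultraproduct ℱ A M ≃ₗ[A] M α₀) := fun _ ⟨e⟩ => ⟨E.trans e.symm⟩
  obtain ⟨α₀, hα₀⟩ := hK.exists
  exact ⟨⟨_, hK, hS⟩, α₀, hS α₀ hα₀⟩

/-- The ultraproduct of a bounded family of modules over a finite ring is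
isomorphic to a member of the family; indeed to any member indexed by some set of
the ultrafilter. -/
theorem ultraproduct_of_bounded_family_isomorphic_to_member
    {X : Type*} [Infinite X] (ℱ : Ultrafilter X) (hℱ : ∀ x : X, ℱ ≠ pure x)
    (A : Type*) [Ring A] [Finite A]
    (M : X → Type*) [∀ α, AddCommGroup (M α)] [∀ α, Module A (M α)]
    (s : ℕ) (hbdd : ∀ α, ∃ f : (Fin s → A) →ₗ[A] M α, Function.Surjective f) :
    (∃ S ∈ ℱ, ∀ α₀ ∈ S, Nonempty (Ultraproduct ℱ A M ≃ₗ[A] M α₀)) ∧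
      ∃ α₀ : X, Nonempty (Ultraproduct ℱ A M ≃ₗ[A] M α₀) :=
  ultraproduct_of_bounded_family_isomorphic_to_member_general ℱ A M s hbdd
end

section
/- Let R be a complete Noetherian local ring with maximal ideal 𝔪 and finite residue field, X an infinite set, and ℱ a non-principal ultrafilter on X. If M is a finitely generated R-module, then the natural map M → Patch_R((M)_{α∈X}) = lim_{n} (∏_{α∈X} M/𝔪^n M)_ℱ, induced by the diagonal maps M → ∏_{α∈X} M/𝔪^n M, is an isomorphism of R-modules. In other words, the patching module of the constant family with value M is isomorphic to M. -/
open Filter IsLocalRing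

section SeqLimit

variable (R : Type*) [CommRing R]

/-- The inverse limit of a sequence of modules, realised as a submodule of the product. -/
def seqLimit (P : ℕ → Type*) [∀ n, AddCommGroup (P n)] [∀ n, Module R (P n)]
    (g : ∀ n, P (n + 1) →ₗ[R] P n) : Submodule R (∀ n, P n) where
  carrier := {x | ∀ n, g n (x (n + 1)) = x n}
  add_mem' := by
    intro a b ha hb n
    simp [ha n, hb n]
  zero_mem' := by intro n; simp
  smul_mem' := by
    intro c x hx n
    simp [hx n]

end SeqLimit

section Patch

variable (R : Type*) [CommRing R] [IsLocalRing R]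

/-- The submodule 𝔪ⁿ•M of a module M. -/
abbrev mPow (n : ℕ) (M : Type*) [AddCommGroup M] [Module R M] : Submodule R M :=
  (maximalIdeal R ^ n) • (⊤ : Submodule R M)

/-- The quotient M/𝔪ⁿM. -/
abbrev ModQuot (n : ℕ) (M : Type*) [AddCommGroup M] [Module R M] :=
  M ⧸ mPow R n M

lemma mPow_succ_le (n : ℕ) (M : Type*) [AddCommGroup M] [Module R M] :
    mPow R (n + 1) M ≤ mPow R n M :=
  Submodule.smul_mono_left (Ideal.pow_le_pow_right n.le_succ)

/-- The reduction map M/𝔪ⁿ⁺¹M → M/𝔪ⁿM. -/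
def quotTrans (n : ℕ) (M : Type*) [AddCommGroup M] [Module R M] :
    ModQuot R (n + 1) M →ₗ[R] ModQuot R n M :=
  Submodule.mapQ _ _ LinearMap.id <| by
    intro x hx
    simpa using mPow_succ_le R n M hx

lemma quotTrans_mk (n : ℕ) (M : Type*) [AddCommGroup M] [Module R M] (x : M) :
    quotTrans R n M (Submodule.Quotient.mk x) = Submodule.Quotient.mk x := by
  simp [quotTrans, Submodule.mapQ_apply]

variable {X : Type*} (ℱ : Ultrafilter X)

/-- The n-th level of the patching construction: the ultraproduct of the quotients M α/𝔪ⁿ. -/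
abbrev UP (M : X → Type*) [∀ α, AddCommGroup (M α)] [∀ α, Module R (M α)] (n : ℕ) :=
  Ultraproduct ℱ R (fun α => ModQuot R n (M α))

/-- The transition maps between the levels of the patching construction. -/
def upTrans (M : X → Type*) [∀ α, AddCommGroup (M α)] [∀ α, Module R (M α)] (n : ℕ) :
    UP R ℱ M (n + 1) →ₗ[R] UP R ℱ M n :=
  ultraMap ℱ R (fun α => quotTrans R n (M α))

/-- The patching module of a family of R-modules: the inverse limit over n of the
ultraproducts of the quotients M α/𝔪ⁿ. -/
def PatchS (M : X → Type*) [∀ α, AddCommGroup (M α)] [∀ α, Module R (M α)] :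
    Submodule R (∀ n, UP R ℱ M n) :=
  seqLimit R (fun n => UP R ℱ M n) (fun n => upTrans R ℱ M n)

lemma mem_PatchS {M : X → Type*} [∀ α, AddCommGroup (M α)] [∀ α, Module R (M α)]
    {x : ∀ n, UP R ℱ M n} :
    x ∈ PatchS R ℱ M ↔ ∀ n, upTrans R ℱ M n (x (n + 1)) = x n := Iff.rfl

-- functoriality of ModQuot
lemma mapQ_cond {M N : Type*} [AddCommGroup M] [Module R M] [AddCommGroup N] [Module R N]
    (f : M →ₗ[R] N) (n : ℕ) : mPow R n M ≤ (mPow R n N).comap f := by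
  rw [← Submodule.map_le_iff_le_comap, Submodule.map_smul'']
  exact Submodule.smul_mono le_rfl le_top

/-- The map induced by f : M →ₗ N on the quotients modulo 𝔪ⁿ. -/
def modQuotMap (n : ℕ) {M N : Type*} [AddCommGroup M] [Module R M] [AddCommGroup N]
    [Module R N] (f : M →ₗ[R] N) : ModQuot R n M →ₗ[R] ModQuot R n N :=
  Submodule.mapQ _ _ f (mapQ_cond R f n)

lemma modQuotMap_mk (n : ℕ) {M N : Type*} [AddCommGroup M] [Module R M] [AddCommGroup N]
    [Module R N] (f : M →ₗ[R] N) (x : M) :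
    modQuotMap R n f (Submodule.Quotient.mk x) = Submodule.Quotient.mk (f x) := by
  simp [modQuotMap, Submodule.mapQ_apply]

lemma quotTrans_modQuotMap {M N : Type*} [AddCommGroup M] [Module R M] [AddCommGroup N]
    [Module R N] (f : M →ₗ[R] N) (n : ℕ) (q : ModQuot R (n + 1) M) :
    quotTrans R n N (modQuotMap R (n + 1) f q) = modQuotMap R n f (quotTrans R n M q) := by
  obtain ⟨z, rfl⟩ := Submodule.Quotient.mk_surjective _ q
  rw [modQuotMap_mk, quotTrans_mk, quotTrans_mk, modQuotMap_mk]

lemma level_compat {M N : X → Type*} [∀ α, AddCommGroup (M α)] [∀ α, Module R (M α)]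
    [∀ α, AddCommGroup (N α)] [∀ α, Module R (N α)] (f : ∀ α, M α →ₗ[R] N α) (n : ℕ)
    (u : UP R ℱ M (n + 1)) :
    upTrans R ℱ N n (ultraMap ℱ R (fun α => modQuotMap R (n + 1) (f α)) u) =
      ultraMap ℱ R (fun α => modQuotMap R n (f α)) (upTrans R ℱ M n u) := by
  obtain ⟨y, rfl⟩ := Submodule.Quotient.mk_surjective _ u
  simp only [upTrans]
  rw [ultraMap_mk, ultraMap_mk, ultraMap_mk, ultraMap_mk]
  exact congrArg _ (funext fun α => quotTrans_modQuotMap R (f α) n (y α))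

/-- The map induced on patching modules by a family of linear maps. -/
def patchMap {M N : X → Type*} [∀ α, AddCommGroup (M α)] [∀ α, Module R (M α)]
    [∀ α, AddCommGroup (N α)] [∀ α, Module R (N α)] (f : ∀ α, M α →ₗ[R] N α) :
    ↥(PatchS R ℱ M) →ₗ[R] ↥(PatchS R ℱ N) :=
  LinearMap.codRestrict _
    ((LinearMap.pi fun n =>
        (ultraMap ℱ R fun α => modQuotMap R n (f α)).comp (LinearMap.proj n)).comp
      (PatchS R ℱ M).subtype)
    (by
      intro x
      rw [mem_PatchS]
      intro n
      simp only [LinearMap.comp_apply, LinearMap.pi_apply, LinearMap.proj_apply,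
        Submodule.subtype_apply]
      rw [level_compat, x.2 n])

end Patch

section Diag

variable (R : Type*) [CommRing R] [IsLocalRing R] {X : Type*} (ℱ : Ultrafilter X)

/-- The natural map from a module to the patching module of the constant family. -/
def patchDiag (M : Type*) [AddCommGroup M] [Module R M] :
    M →ₗ[R] ↥(PatchS R ℱ (fun _ : X => M)) :=
  LinearMap.codRestrict _
    (LinearMap.pi fun n => (ultraZero ℱ R (fun _ : X => ModQuot R n M)).mkQ.comp
        (LinearMap.pi fun _ : X => (mPow R n M).mkQ))
    (by
      intro m
      rw [mem_PatchS]
      intro n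
      simp only [LinearMap.pi_apply, LinearMap.comp_apply, Submodule.mkQ_apply]
      rw [upTrans, ultraMap_mk]
      exact congrArg _ (funext fun α => quotTrans_mk R n M m))

end Diag

/-!
For a finite module `N`, every family in `N` is `ℱ`-almost constant, so the diagonal map
`N → (∏_α N)_ℱ` is an isomorphism. Each `M/𝔪ⁿM` is finite (`𝔪` is finitely
generated and `R/𝔪` is finite), so the patching module of the constant family is the inverse
limit of the `M/𝔪ⁿM`, i.e. the `𝔪`-adic completion `M̂`. Finally `M → M̂` is injective by
Krull's intersection theorem, and surjective because `R̂ ⊗ M → M̂` is onto for finite `M` while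
`R → R̂` is onto since `R` is complete.
-/

section UltraDiag

variable {X : Type*} (ℱ : Ultrafilter X) (A : Type*) [Ring A]
  (N : Type*) [AddCommGroup N] [Module A N]

def ultraDiag : N →ₗ[A] Ultraproduct ℱ A (fun _ : X => N) :=
  (ultraZero ℱ A (fun _ : X => N)).mkQ ∘ₗ LinearMap.pi (fun _ : X => LinearMap.id)

lemma ultraDiag_apply (v : N) :
    ultraDiag ℱ A N v = Submodule.Quotient.mk (fun _ => v) := rfl

lemma ultraDiag_injective : Function.Injective (ultraDiag ℱ A N) := by
  refine (injective_iff_map_eq_zero _).mpr fun v hv => ?_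
  rw [ultraDiag_apply, Submodule.Quotient.mk_eq_zero, mem_ultraZero] at hv
  exact hv.exists.choose_spec

lemma ultraDiag_surjective [Finite N] : Function.Surjective (ultraDiag ℱ A N) := by
  intro x
  obtain ⟨y, rfl⟩ := Submodule.Quotient.mk_surjective _ x
  obtain ⟨v, hv⟩ := Ultrafilter.eq_pure_of_finite (ℱ.map y)
  have hy : y ⁻¹' {v} ∈ ℱ := by simpa using congrArg (fun 𝒢 : Ultrafilter N => {v} ∈ 𝒢) hv
  refine ⟨v, (Submodule.Quotient.eq _).mpr ?_⟩
  filter_upwards [Ultrafilter.mem_coe.mpr hy] with α hα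
  exact sub_eq_zero.mpr (Eq.symm hα)

lemma ultraMap_ultraDiag {P : Type*} [AddCommGroup P] [Module A P] (f : N →ₗ[A] P) (v : N) :
    ultraMap ℱ A (fun _ => f) (ultraDiag ℱ A N v) = ultraDiag ℱ A P (f v) :=
  ultraMap_mk ℱ A _ _

end UltraDiag

namespace AdicCompletion

lemma of_surjective_of_finite {R : Type*} [CommRing R] (I : Ideal R) [IsPrecomplete I R]
    (M : Type*) [AddCommGroup M] [Module R M] [Module.Finite R M] :
    Function.Surjective (of I M) := by
  intro y
  obtain ⟨t, rfl⟩ := ofTensorProduct_surjective_of_finite I M y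
  induction t using TensorProduct.induction_on with
  | zero => exact ⟨0, by simp⟩
  | tmul r x =>
    obtain ⟨s, rfl⟩ := of_surjective I R r
    refine ⟨s • x, ?_⟩
    rw [map_smul, ofTensorProduct_tmul, ← algebraMap_smul (AdicCompletion I R) s]
    rfl
  | add t u ht hu =>
    obtain ⟨a, ha⟩ := ht
    obtain ⟨b, hb⟩ := hu
    exact ⟨a + b, by simp [ha, hb]⟩

end AdicCompletion

section AdicCompletionToPatch

variable (R : Type*) [CommRing R] [IsLocalRing R] {X : Type*} (ℱ : Ultrafilter X)
  (M : Type*) [AddCommGroup M] [Module R M]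

lemma finite_modQuot [IsNoetherianRing R] [Finite (ResidueField R)] [Module.Finite R M]
    (n : ℕ) : Finite (ModQuot R n M) :=
  have : Finite (R ⧸ maximalIdeal R) := ‹Finite (ResidueField R)›
  have := Ideal.finite_quotient_pow (IsNoetherian.noetherian (maximalIdeal R)) n
  Submodule.finite_quotient_smul _ Module.Finite.fg_top

lemma quotTrans_eq_transitionMap (n : ℕ) :
    quotTrans R n M = AdicCompletion.transitionMap (maximalIdeal R) M n.le_succ := rfl

lemma upTrans_ultraDiag (n : ℕ) (v : ModQuot R (n + 1) M) :
    upTrans R ℱ (fun _ : X => M) n (ultraDiag ℱ R (ModQuot R (n + 1) M) v) =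
      ultraDiag ℱ R (ModQuot R n M) (quotTrans R n M v) :=
  ultraMap_ultraDiag ℱ R _ _ v

noncomputable def adicCompletionToPatch :
    AdicCompletion (maximalIdeal R) M →ₗ[R] PatchS R ℱ (fun _ : X => M) :=
  LinearMap.codRestrict _
    (LinearMap.pi fun n =>
      ultraDiag ℱ R (ModQuot R n M) ∘ₗ AdicCompletion.eval (maximalIdeal R) M n)
    fun x n => by
      simp only [LinearMap.pi_apply, LinearMap.comp_apply, AdicCompletion.eval_apply]
      rw [upTrans_ultraDiag, quotTrans_eq_transitionMap, x.prop]

lemma patchDiag_eq_adicCompletionToPatch_comp_of :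
    patchDiag R ℱ M = adicCompletionToPatch R ℱ M ∘ₗ AdicCompletion.of (maximalIdeal R) M :=
  rfl

lemma adicCompletionToPatch_injective : Function.Injective (adicCompletionToPatch R ℱ M) :=
  fun _ _ hxy => AdicCompletion.ext fun n =>
    ultraDiag_injective ℱ R _ (congrFun (congrArg Subtype.val hxy) n)

lemma adicCompletionToPatch_surjective [∀ n, Finite (ModQuot R n M)] :
    Function.Surjective (adicCompletionToPatch R ℱ M) := by
  rintro ⟨p, hp⟩
  choose v hv using fun n => ultraDiag_surjective ℱ R (ModQuot R n M) (p n)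
  have hsucc : ∀ n, v n = quotTrans R n M (v (n + 1)) := fun n =>
    ultraDiag_injective ℱ R _ <| by rw [← upTrans_ultraDiag, hv, hv, hp]
  have hanti : Antitone fun n => mPow R n M :=
    fun _ _ h => Submodule.smul_mono_left (Ideal.pow_le_pow_right h)
  exact ⟨⟨v, fun hmn => (Submodule.eq_factor_of_eq_factor_succ hanti v hsucc hmn).symm⟩,
    Subtype.ext <| funext hv⟩

end AdicCompletionToPatch

theorem patchDiag_bijective_general
    (R : Type*) [CommRing R] [IsLocalRing R] [IsNoetherianRing R]
    [IsAdicComplete (IsLocalRing.maximalIdeal R) R] [Finite (IsLocalRing.ResidueField R)]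
    {X : Type*} (ℱ : Ultrafilter X)
    (M : Type*) [AddCommGroup M] [Module R M] [Module.Finite R M] :
    Function.Bijective (patchDiag R ℱ (X := X) M) := by
  have := finite_modQuot R M
  rw [patchDiag_eq_adicCompletionToPatch_comp_of, LinearMap.coe_comp]
  exact Function.Bijective.comp
    ⟨adicCompletionToPatch_injective R ℱ M, adicCompletionToPatch_surjective R ℱ M⟩
    ⟨AdicCompletion.of_injective _ M, AdicCompletion.of_surjective_of_finite _ M⟩

/-- Let R be a complete Noetherian local ring with finite residue field and
ℱ a non-principal ultrafilter on an infinite set X.  For a finitely generated R-module M, the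
natural map from M to the patching module of the constant family with value M is an
isomorphism. -/
theorem patchDiag_bijective
    (R : Type*) [CommRing R] [IsLocalRing R] [IsNoetherianRing R]
    [IsAdicComplete (IsLocalRing.maximalIdeal R) R] [Finite (IsLocalRing.ResidueField R)]
    {X : Type*} [Infinite X] (ℱ : Ultrafilter X) (hℱ : ∀ x : X, ℱ ≠ pure x)
    (M : Type*) [AddCommGroup M] [Module R M] [Module.Finite R M] :
    Function.Bijective (patchDiag R ℱ (X := X) M) :=
  patchDiag_bijective_general R ℱ M
end

section
/- Let R be a complete Noetherian local ring with maximal ideal 𝔪 and finite residue field, X an infinite set, ℱ a non-principal ultrafilter on X, and (M_α)_{α∈X} a family of R-modules. Then for each n ≥ 1 there is a natural isomorphism of R-modules Patch_R((M_α)) / 𝔪^n Patch_R((M_α)) ≅ (∏_{α∈X} M_α/𝔪^n M_α)_ℱ, induced by the projection from the inverse limit to its n-th term. -/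
/-!
Since `𝔪ⁿ` is finitely generated, reduction modulo `𝔪ⁿ` commutes with ultraproducts: the
ultraproduct of the `M α/𝔪ⁿ M α` is `Q/𝔪ⁿ Q`, where `Q` is the ultraproduct of the `M α`.
Hence the patching module is the `𝔪`-adic completion `Q̂` of `Q`, and the claim reduces to
`Q̂/𝔪ⁿ Q̂ ≅ Q/𝔪ⁿ Q`, which holds for the adic completion along any finitely generated ideal.
-/

open Filter IsLocalRing

section Proj

variable (R : Type*) [CommRing R] [IsLocalRing R] {X : Type*} (ℱ : Ultrafilter X)

lemma modQuot_smul_eq_zero (n : ℕ) {M : Type*} [AddCommGroup M] [Module R M] {r : R}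
    (hr : r ∈ IsLocalRing.maximalIdeal R ^ n) (q : ModQuot R n M) : r • q = 0 := by
  obtain ⟨z, rfl⟩ := Submodule.Quotient.mk_surjective _ q
  rw [← Submodule.Quotient.mk_smul, Submodule.Quotient.mk_eq_zero]
  exact Submodule.smul_mem_smul hr Submodule.mem_top

lemma up_smul_eq_zero (n : ℕ) (M : X → Type*) [∀ α, AddCommGroup (M α)]
    [∀ α, Module R (M α)] {r : R} (hr : r ∈ IsLocalRing.maximalIdeal R ^ n)
    (u : UP R ℱ M n) : r • u = 0 := by
  obtain ⟨y, rfl⟩ := Submodule.Quotient.mk_surjective _ u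
  rw [← Submodule.Quotient.mk_smul, Submodule.Quotient.mk_eq_zero]
  have hy : r • y = 0 := funext fun α => modQuot_smul_eq_zero R n hr (y α)
  rw [hy]
  exact Submodule.zero_mem _

/-- The map from the quotient of the patching module by 𝔪ⁿ to the n-th level of the patching
construction, induced by the projection from the inverse limit to its n-th term. -/
def patchProjQ (M : X → Type*) [∀ α, AddCommGroup (M α)] [∀ α, Module R (M α)] (n : ℕ) :
    ModQuot R n ↥(PatchS R ℱ M) →ₗ[R] UP R ℱ M n :=
  Submodule.liftQ _ ((LinearMap.proj n).comp (PatchS R ℱ M).subtype) <| by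
    refine Submodule.smul_le.2 fun r hr x _ => ?_
    rw [LinearMap.mem_ker]
    simp only [LinearMap.comp_apply, Submodule.subtype_apply, LinearMap.proj_apply]
    rw [Submodule.coe_smul, Pi.smul_apply]
    exact up_smul_eq_zero R ℱ n M hr _

end Proj

theorem Submodule.exists_sum_smul_eq_of_mem_span_smul_top {A M : Type*} [CommRing A]
    [AddCommGroup M] [Module A M] {s : Finset A} {x : M}
    (hx : x ∈ Ideal.span (s : Set A) • (⊤ : Submodule A M)) :
    ∃ c : A → M, ∑ r ∈ s, r • c r = x := by
  refine Submodule.smul_induction_on hx (fun r hr m _ => ?_) ?_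
  · obtain ⟨f, -, rfl⟩ := Submodule.mem_span_finset.mp hr
    exact ⟨fun i => f i • m, by simp [Finset.sum_smul, smul_smul, mul_comm]⟩
  · rintro _ _ ⟨c, rfl⟩ ⟨d, rfl⟩
    exact ⟨c + d, by simp [smul_add, Finset.sum_add_distrib]⟩

theorem Submodule.liftQ_bijective {A M N : Type*} [CommRing A] [AddCommGroup M] [Module A M]
    [AddCommGroup N] [Module A N] {p : Submodule A M} {f : M →ₗ[A] N}
    (hker : LinearMap.ker f = p) (hf : Function.Surjective f) :
    Function.Bijective (p.liftQ f hker.ge) := by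
  refine ⟨LinearMap.ker_eq_bot.mp (Submodule.ker_liftQ_eq_bot' p f hker.symm), fun y => ?_⟩
  obtain ⟨x, rfl⟩ := hf y
  exact ⟨Submodule.Quotient.mk x, rfl⟩

section UltraproductQuotient

variable {X : Type*} (ℱ : Ultrafilter X) {A : Type*} [CommRing A]
  (M : X → Type*) [∀ α, AddCommGroup (M α)] [∀ α, Module A (M α)]

def ultraReduce (J : Ideal A) :
    Ultraproduct ℱ A M →ₗ[A] Ultraproduct ℱ A (fun α => M α ⧸ J • (⊤ : Submodule A (M α))) :=
  ultraMap ℱ A fun α => (J • ⊤ : Submodule A (M α)).mkQ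

theorem ultraReduce_surjective (J : Ideal A) : Function.Surjective (ultraReduce ℱ M J) := by
  intro u
  obtain ⟨y, rfl⟩ := Submodule.Quotient.mk_surjective _ u
  choose x hx using fun α => Submodule.Quotient.mk_surjective _ (y α)
  refine ⟨Submodule.Quotient.mk x, ?_⟩
  rw [ultraReduce, ultraMap_mk]
  exact congrArg _ (funext hx)

theorem smul_ultraproduct_quotient_eq_zero {J : Ideal A} {r : A} (hr : r ∈ J)
    (u : Ultraproduct ℱ A fun α => M α ⧸ J • (⊤ : Submodule A (M α))) : r • u = 0 := by
  obtain ⟨y, rfl⟩ := Submodule.Quotient.mk_surjective _ u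
  rw [← Submodule.Quotient.mk_smul, Submodule.Quotient.mk_eq_zero]
  refine Eventually.of_forall fun α => ?_
  obtain ⟨z, hz⟩ := Submodule.Quotient.mk_surjective _ (y α)
  rw [Pi.smul_apply, ← hz, ← Submodule.Quotient.mk_smul, Submodule.Quotient.mk_eq_zero]
  exact Submodule.smul_mem_smul hr Submodule.mem_top

/-- Finite generation of `J` is what lets elements that lie in `J M_α` for `ℱ`-almost all `α`
be written with coefficients from one finite generating set, uniformly in `α`. -/
theorem ker_ultraReduce {J : Ideal A} (hJ : J.FG) :
    LinearMap.ker (ultraReduce ℱ M J) = J • ⊤ := by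
  refine le_antisymm (fun u hu => ?_) (Submodule.smul_le.mpr fun r hr u _ => ?_)
  · obtain ⟨y, rfl⟩ := Submodule.Quotient.mk_surjective _ u
    rw [LinearMap.mem_ker, ultraReduce, ultraMap_mk, Submodule.Quotient.mk_eq_zero,
      mem_ultraZero] at hu
    obtain ⟨s, rfl⟩ := hJ
    have hc (α : X) : ∃ c : A → M α,
        y α ∈ Ideal.span (s : Set A) • (⊤ : Submodule A (M α)) → ∑ r ∈ s, r • c r = y α := by
      by_cases h : y α ∈ Ideal.span (s : Set A) • (⊤ : Submodule A (M α))
      · obtain ⟨c, hc⟩ := Submodule.exists_sum_smul_eq_of_mem_span_smul_top h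
        exact ⟨c, fun _ => hc⟩
      · exact ⟨0, fun h' => absurd h' h⟩
    choose c hc using hc
    have hy : (Submodule.Quotient.mk y : Ultraproduct ℱ A M) =
        Submodule.Quotient.mk (∑ r ∈ s, r • fun α => c α r) := by
      rw [Submodule.Quotient.eq, mem_ultraZero]
      filter_upwards [hu] with α hα
      rw [Pi.sub_apply, Finset.sum_apply, ← hc α ((Submodule.Quotient.mk_eq_zero _).mp hα)]
      exact sub_self _
    rw [hy, ← Submodule.mkQ_apply, map_sum]
    exact Submodule.sum_mem _ fun r hr => by
      rw [map_smul]
      exact Submodule.smul_mem_smul (Ideal.subset_span hr) Submodule.mem_top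
  · rw [LinearMap.mem_ker, map_smul]
    exact smul_ultraproduct_quotient_eq_zero ℱ M hr _

noncomputable def ultraQuotEquiv {J : Ideal A} (hJ : J.FG) :
    (Ultraproduct ℱ A M ⧸ J • (⊤ : Submodule A (Ultraproduct ℱ A M))) ≃ₗ[A]
      Ultraproduct ℱ A (fun α => M α ⧸ J • (⊤ : Submodule A (M α))) :=
  (Submodule.quotEquivOfEq _ _ (ker_ultraReduce ℱ M hJ).symm).trans
    ((ultraReduce ℱ M J).quotKerEquivOfSurjective (ultraReduce_surjective ℱ M J))

end UltraproductQuotient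

section PatchingAsCompletion

variable {R : Type*} [CommRing R] [IsLocalRing R] {X : Type*}
  (ℱ : Ultrafilter X) (M : X → Type*) [∀ α, AddCommGroup (M α)] [∀ α, Module R (M α)]

noncomputable def ultraproductModPowEquiv (hfg : (maximalIdeal R).FG) (n : ℕ) :
    ModQuot R n (Ultraproduct ℱ R M) ≃ₗ[R] UP R ℱ M n :=
  ultraQuotEquiv ℱ M (hfg.pow (n := n))

theorem upTrans_ultraproductModPowEquiv (hfg : (maximalIdeal R).FG) (n : ℕ)
    (q : ModQuot R (n + 1) (Ultraproduct ℱ R M)) :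
    upTrans R ℱ M n (ultraproductModPowEquiv ℱ M hfg (n + 1) q) =
      ultraproductModPowEquiv ℱ M hfg n (Submodule.factorPow _ _ n.le_succ q) := by
  obtain ⟨u, rfl⟩ := Submodule.Quotient.mk_surjective _ q
  obtain ⟨y, rfl⟩ := Submodule.Quotient.mk_surjective _ u
  rfl

noncomputable def adicCompletionEquivPatch (hfg : (maximalIdeal R).FG) :
    AdicCompletion (maximalIdeal R) (Ultraproduct ℱ R M) ≃ₗ[R] PatchS R ℱ M where
  toFun x := ⟨fun n => ultraproductModPowEquiv ℱ M hfg n (x.val n), fun n =>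
    (upTrans_ultraproductModPowEquiv ℱ M hfg n _).trans (congrArg _ (x.property n.le_succ))⟩
  map_add' x y := Subtype.ext <| funext fun n => map_add _ (x.val n) (y.val n)
  map_smul' r x := Subtype.ext <| funext fun n => map_smul _ r (x.val n)
  invFun p := ⟨fun n => (ultraproductModPowEquiv ℱ M hfg n).symm (p.1 n), fun hmn =>
    (Submodule.eq_factor_of_eq_factor_succ (fun _ _ h => Submodule.pow_smul_top_le _ _ h) _
      (fun m => (ultraproductModPowEquiv ℱ M hfg m).injective <| by
        rw [LinearEquiv.apply_symm_apply, ← upTrans_ultraproductModPowEquiv,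
          LinearEquiv.apply_symm_apply]
        exact (p.2 m).symm) hmn).symm⟩
  left_inv x := AdicCompletion.ext fun n => LinearEquiv.symm_apply_apply _ (x.val n)
  right_inv p := Subtype.ext <| funext fun n => LinearEquiv.apply_symm_apply _ (p.1 n)

theorem adicCompletionEquivPatch_apply (hfg : (maximalIdeal R).FG)
    (x : AdicCompletion (maximalIdeal R) (Ultraproduct ℱ R M)) (n : ℕ) :
    (adicCompletionEquivPatch ℱ M hfg x : ∀ n, UP R ℱ M n) n =
      ultraproductModPowEquiv ℱ M hfg n (AdicCompletion.eval _ _ n x) :=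
  rfl

theorem ker_patchProj (hfg : (maximalIdeal R).FG) (n : ℕ) :
    LinearMap.ker ((LinearMap.proj n).comp (PatchS R ℱ M).subtype) =
      mPow R n (PatchS R ℱ M) := by
  refine le_antisymm (fun p hp => ?_) (Submodule.smul_le.mpr fun r hr p _ =>
    LinearMap.mem_ker.mpr ((map_smul _ r p).trans (up_smul_eq_zero R ℱ n M hr _)))
  obtain ⟨x, rfl⟩ := (adicCompletionEquivPatch ℱ M hfg).surjective p
  rw [LinearMap.mem_ker, LinearMap.comp_apply, Submodule.subtype_apply, LinearMap.proj_apply,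
    adicCompletionEquivPatch_apply, LinearEquiv.map_eq_zero_iff, ← LinearMap.mem_ker,
    ← AdicCompletion.pow_smul_top_eq_ker_eval hfg] at hp
  exact Submodule.smul_top_le_comap_smul_top _ (adicCompletionEquivPatch ℱ M hfg).toLinearMap hp

theorem patchProj_surjective (hfg : (maximalIdeal R).FG) (n : ℕ) :
    Function.Surjective ((LinearMap.proj n).comp (PatchS R ℱ M).subtype) := fun u => by
  obtain ⟨x, hx⟩ :=
    AdicCompletion.eval_surjective _ _ n ((ultraproductModPowEquiv ℱ M hfg n).symm u)
  refine ⟨adicCompletionEquivPatch ℱ M hfg x, ?_⟩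
  rw [LinearMap.comp_apply, Submodule.subtype_apply, LinearMap.proj_apply,
    adicCompletionEquivPatch_apply, hx, LinearEquiv.apply_symm_apply]

end PatchingAsCompletion

theorem patchProjQ_bijective_general
    (R : Type*) [CommRing R] [IsLocalRing R] [IsNoetherianRing R]
    {X : Type*} (ℱ : Ultrafilter X)
    (M : X → Type*) [∀ α, AddCommGroup (M α)] [∀ α, Module R (M α)]
    (n : ℕ) :
    Function.Bijective (patchProjQ R ℱ M n) :=
  have hfg : (maximalIdeal R).FG := IsNoetherian.noetherian _
  Submodule.liftQ_bijective (ker_patchProj ℱ M hfg n) (patchProj_surjective ℱ M hfg n)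

/-- Let R be a complete Noetherian local ring with finite residue field and ℱ
a non-principal ultrafilter on an infinite set X.  For any family of R-modules and any n ≥ 1,
the natural map from the quotient of the patching module by 𝔪ⁿ to the ultraproduct of the
quotients M α/𝔪ⁿ is an isomorphism. -/
theorem patchProjQ_bijective
    (R : Type*) [CommRing R] [IsLocalRing R] [IsNoetherianRing R]
    [IsAdicComplete (IsLocalRing.maximalIdeal R) R] [Finite (IsLocalRing.ResidueField R)]
    {X : Type*} [Infinite X] (ℱ : Ultrafilter X) (hℱ : ∀ x : X, ℱ ≠ pure x)
    (M : X → Type*) [∀ α, AddCommGroup (M α)] [∀ α, Module R (M α)]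
    (n : ℕ) (hn : 1 ≤ n) :
    Function.Bijective (patchProjQ R ℱ M n) :=
  patchProjQ_bijective_general R ℱ M n
end

section
/- Let R be a complete Noetherian local ring with maximal ideal 𝔪 and finite residue field, X an infinite set, and ℱ a non-principal ultrafilter on X. Let e : X → ℤ_{≥1} ∪ {∞} be a function such that the set {α ∈ X : e(α) < N} is finite for every integer N (with the convention 𝔪^∞ = 0). If (M_α)_{α∈X} is a bounded family of R-modules, then the family of quotient maps M_α → M_α/𝔪^{e(α)} M_α induces an isomorphism Patch_R((M_α)) → Patch_R((M_α/𝔪^{e(α)} M_α)). -/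
/-!
Since `e α ≥ n` for all but finitely many `α` and `ℱ` is non-principal, at level `n`
the maps `M α/𝔪ⁿ → (M α/𝔪^{e α})/𝔪ⁿ` are isomorphisms for `ℱ`-almost all `α`, hence
so is their ultraproduct; an inverse limit of isomorphisms is an isomorphism.
-/

open Filter IsLocalRing

section MPowE

variable (R : Type*) [CommRing R] [IsLocalRing R]

/-- The submodule 𝔪^e•M for an extended natural number e, with the convention 𝔪^∞ = 0. -/
def mPowE (e : ℕ∞) (M : Type*) [AddCommGroup M] [Module R M] : Submodule R M :=
  WithTop.recTopCoe ⊥ (fun n : ℕ => mPow R n M) e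

end MPowE

lemma Ultrafilter.le_cofinite_of_ne_pure {X : Type*} {ℱ : Ultrafilter X}
    (hℱ : ∀ x : X, ℱ ≠ pure x) : (ℱ : Filter X) ≤ cofinite :=
  ℱ.le_cofinite_or_eq_pure.resolve_right fun ⟨a, ha⟩ => hℱ a ha

section Ultra

variable {X : Type*} (ℱ : Ultrafilter X) (A : Type*) [Ring A]
  {M N : X → Type*} [∀ α, AddCommGroup (M α)] [∀ α, Module A (M α)]
  [∀ α, AddCommGroup (N α)] [∀ α, Module A (N α)] (f : ∀ α, M α →ₗ[A] N α)

lemma ultraMap_injective (hf : ∀ᶠ α in (ℱ : Filter X), Function.Injective (f α)) :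
    Function.Injective (ultraMap ℱ A f) := by
  rw [injective_iff_map_eq_zero]
  intro u hu
  obtain ⟨x, rfl⟩ := Submodule.Quotient.mk_surjective _ u
  rw [ultraMap_mk, Submodule.Quotient.mk_eq_zero, mem_ultraZero] at hu
  rw [Submodule.Quotient.mk_eq_zero, mem_ultraZero]
  filter_upwards [hu, hf] with α hxα hfα
  exact hfα (by simpa using hxα)

lemma ultraMap_surjective (hf : ∀ α, Function.Surjective (f α)) :
    Function.Surjective (ultraMap ℱ A f) := by
  intro u
  obtain ⟨y, rfl⟩ := Submodule.Quotient.mk_surjective _ u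
  choose x hx using fun α => hf α (y α)
  exact ⟨Submodule.Quotient.mk x, by rw [ultraMap_mk]; exact congrArg _ (funext hx)⟩

end Ultra

section Patch

variable (R : Type*) [CommRing R] [IsLocalRing R]

lemma mPowE_le_mPow {e : ℕ∞} {n : ℕ} (h : (n : ℕ∞) ≤ e) (M : Type*) [AddCommGroup M]
    [Module R M] : mPowE R e M ≤ mPow R n M := by
  cases e with
  | top => exact bot_le
  | coe k => exact Submodule.smul_mono_left (Ideal.pow_le_pow_right (by exact_mod_cast h))

variable {M : Type*} [AddCommGroup M] [Module R M] (n : ℕ) (p : Submodule R M)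

lemma modQuotMap_mkQ_surjective : Function.Surjective (modQuotMap R n p.mkQ) := by
  intro q
  obtain ⟨y, rfl⟩ := Submodule.Quotient.mk_surjective _ q
  obtain ⟨x, rfl⟩ := Submodule.Quotient.mk_surjective _ y
  exact ⟨Submodule.Quotient.mk x, modQuotMap_mk R n p.mkQ x⟩

lemma mPow_quotient_eq_map : mPow R n (M ⧸ p) = (mPow R n M).map p.mkQ := by
  rw [Submodule.map_smul'', Submodule.map_top, Submodule.range_mkQ]

lemma modQuotMap_mkQ_injective (hp : p ≤ mPow R n M) :
    Function.Injective (modQuotMap R n p.mkQ) := by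
  rw [injective_iff_map_eq_zero]
  intro q hq
  obtain ⟨x, rfl⟩ := Submodule.Quotient.mk_surjective _ q
  rw [modQuotMap_mk, Submodule.Quotient.mk_eq_zero, mPow_quotient_eq_map] at hq
  obtain ⟨y, hy, hyx⟩ := hq
  have hxy : x - y ∈ p := (Submodule.Quotient.eq p).mp hyx.symm
  rw [Submodule.Quotient.mk_eq_zero, ← sub_add_cancel x y]
  exact add_mem (hp hxy) hy

variable {X : Type*} (ℱ : Ultrafilter X) {M N : X → Type*}
  [∀ α, AddCommGroup (M α)] [∀ α, Module R (M α)]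
  [∀ α, AddCommGroup (N α)] [∀ α, Module R (N α)] (f : ∀ α, M α →ₗ[R] N α)

lemma patchMap_apply_coe (x : PatchS R ℱ M) (n : ℕ) :
    (patchMap R ℱ f x : ∀ n, UP R ℱ N n) n =
      ultraMap ℱ R (fun α => modQuotMap R n (f α)) ((x : ∀ n, UP R ℱ M n) n) :=
  rfl

variable {R ℱ f}
variable (hlevel : ∀ n, Function.Bijective (ultraMap ℱ R fun α => modQuotMap R n (f α)))
include hlevel

lemma patchMap_injective_of_bijective_levels : Function.Injective (patchMap R ℱ f) := by
  intro x y hxy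
  ext n : 2
  apply (hlevel n).injective
  rw [← patchMap_apply_coe, ← patchMap_apply_coe, hxy]

/-- Levelwise preimages are automatically compatible, since the levels are injective. -/
lemma patchMap_surjective_of_bijective_levels : Function.Surjective (patchMap R ℱ f) := by
  intro y
  choose x hx using fun n => (hlevel n).surjective ((y : ∀ n, UP R ℱ N n) n)
  have hxmem : x ∈ PatchS R ℱ M := by
    intro n
    apply (hlevel n).injective
    rw [← level_compat, hx, hx]
    exact y.2 n
  exact ⟨⟨x, hxmem⟩, Subtype.ext (funext hx)⟩

lemma patchMap_bijective_of_bijective_levels : Function.Bijective (patchMap R ℱ f) :=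
  ⟨patchMap_injective_of_bijective_levels hlevel,
    patchMap_surjective_of_bijective_levels hlevel⟩

end Patch

theorem patch_quotient_by_mPowE_bijective_general
    (R : Type*) [CommRing R] [IsLocalRing R]
    {X : Type*} (ℱ : Ultrafilter X) (hℱ : ∀ x : X, ℱ ≠ pure x)
    (e : X → ℕ∞) (hefin : ∀ N : ℕ, {α | e α < N}.Finite)
    (M : X → Type*) [∀ α, AddCommGroup (M α)] [∀ α, Module R (M α)] :
    Function.Bijective
      (patchMap R ℱ (N := fun α => M α ⧸ mPowE R (e α) (M α))
        (fun α => (mPowE R (e α) (M α)).mkQ)) := by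
  refine patchMap_bijective_of_bijective_levels fun n =>
    ⟨ultraMap_injective ℱ R _ ?_,
      ultraMap_surjective ℱ R _ fun _ => modQuotMap_mkQ_surjective R n _⟩
  have hn : ∀ᶠ α in (ℱ : Filter X), (n : ℕ∞) ≤ e α :=
    (eventually_cofinite.mpr <| (hefin n).subset fun _ => not_le.mp).filter_mono
      (Ultrafilter.le_cofinite_of_ne_pure hℱ)
  filter_upwards [hn] with α hα
  exact modQuotMap_mkQ_injective R n _ (mPowE_le_mPow R hα (M α))

/-- Let R be a complete Noetherian local ring with finite residue field, ℱ a
non-principal ultrafilter on an infinite set X, and e : X → ℤ≥1 ∪ {∞} a function such that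
{α : e α < N} is finite for every integer N.  For a bounded family of R-modules, the family of
quotient maps M α → M α/𝔪^(e α) M α induces an isomorphism of patching modules. -/
theorem patch_quotient_by_mPowE_bijective
    (R : Type*) [CommRing R] [IsLocalRing R] [IsNoetherianRing R]
    [IsAdicComplete (IsLocalRing.maximalIdeal R) R] [Finite (IsLocalRing.ResidueField R)]
    {X : Type*} [Infinite X] (ℱ : Ultrafilter X) (hℱ : ∀ x : X, ℱ ≠ pure x)
    (e : X → ℕ∞) (he : ∀ α, 1 ≤ e α) (hefin : ∀ N : ℕ, {α | e α < N}.Finite)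
    (M : X → Type*) [∀ α, AddCommGroup (M α)] [∀ α, Module R (M α)]
    (s : ℕ) (hbdd : ∀ α, ∃ f : (Fin s → R) →ₗ[R] M α, Function.Surjective f) :
    Function.Bijective
      (patchMap R ℱ (N := fun α => M α ⧸ mPowE R (e α) (M α))
        (fun α => (mPowE R (e α) (M α)).mkQ)) :=
  patch_quotient_by_mPowE_bijective_general R ℱ hℱ e hefin M
end
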